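/- arXiv:1602.04282 — 2 statements merged into one kernel-verified Lean document; each statement's English description precedes it below -/
import Mathlib

section
/- Let K ≥ 1 and let T : Fin K → ℕ, Δ : Fin K → ℝ with Δ i ≥ 0 for all i, and L > 0. If for every i with Δ i > 0 we have (Δ i)² ≤ 4L / (T i), and m = Σ_i T i, then Σ_i (T i) · Δ i ≤ 2 · sqrt(m · K · L). -/
theorem regret_sqrt_bound (K : ℕ) (hK : 1 ≤ K) (T : Fin K → ℕ) (Δ : Fin K → ℝ)
    (hΔ : ∀ i, 0 ≤ Δ i) (L : ℝ) (hL : 0 < L)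
    (hcount : ∀ i, 0 < Δ i → (Δ i) ^ 2 ≤ 4 * L / (T i))
    (m : ℕ) (hm : m = ∑ i, T i) :
    ∑ i, (T i : ℝ) * Δ i ≤ 2 * Real.sqrt (m * K * L) := by
  have step1 : ∀ i, (T i : ℝ) * Δ i ≤ Real.sqrt (T i) * (2 * Real.sqrt L) := by
    intro i
    rcases eq_or_lt_of_le (hΔ i) with h | h
    · rw [← h, mul_zero]
      positivity
    · have hT : (0:ℝ) ≤ (T i : ℝ) := Nat.cast_nonneg _
      have key : ((T i : ℝ) * Δ i) ^ 2 ≤ (T i : ℝ) * (4 * L) := by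
        have := hcount i h
        rcases Nat.eq_zero_or_pos (T i) with h0 | h0
        · simp [h0]
        · have hTpos : (0:ℝ) < (T i : ℝ) := by exact_mod_cast h0
          have : (Δ i) ^ 2 * (T i : ℝ) ≤ 4 * L := by
            rw [div_eq_mul_inv] at this
            calc (Δ i) ^ 2 * (T i : ℝ) ≤ 4 * L * ((T i : ℝ))⁻¹ * (T i : ℝ) := by
                  exact mul_le_mul_of_nonneg_right this hT
              _ = 4 * L := by field_simp
          nlinarith [sq_nonneg (Δ i)]
      have h1 : (T i : ℝ) * Δ i ≤ Real.sqrt ((T i : ℝ) * (4 * L)) := by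
        rw [← Real.sqrt_sq (by positivity : (0:ℝ) ≤ (T i : ℝ) * Δ i)]
        exact Real.sqrt_le_sqrt key
      calc (T i : ℝ) * Δ i ≤ Real.sqrt ((T i : ℝ) * (4 * L)) := h1
        _ = Real.sqrt (T i) * (2 * Real.sqrt L) := by
            rw [Real.sqrt_mul hT, show (4:ℝ) * L = 2^2 * L by ring,
              Real.sqrt_mul (by positivity), Real.sqrt_sq (by norm_num : (0:ℝ) ≤ 2)]
  have step2 : ∑ i, (T i : ℝ) * Δ i ≤ (∑ i, Real.sqrt (T i)) * (2 * Real.sqrt L) := by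
    rw [Finset.sum_mul]
    exact Finset.sum_le_sum fun i _ => step1 i
  have cs : (∑ i, Real.sqrt (T i)) ^ 2 ≤ (K : ℝ) * m := by
    have h := Finset.sum_mul_sq_le_sq_mul_sq Finset.univ (fun _ : Fin K => (1:ℝ))
      (fun i => Real.sqrt (T i))
    simp only [one_mul, one_pow, Finset.sum_const, Finset.card_univ, Fintype.card_fin,
      nsmul_eq_mul, mul_one] at h
    have hsq : ∀ i : Fin K, Real.sqrt (T i) ^ 2 = (T i : ℝ) := fun i =>
      Real.sq_sqrt (Nat.cast_nonneg _)
    calc (∑ i, Real.sqrt (T i)) ^ 2 ≤ (K : ℝ) * ∑ i, Real.sqrt (T i) ^ 2 := h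
      _ = (K : ℝ) * m := by
          rw [hm]
          push_cast
          congr 1
          exact Finset.sum_congr rfl fun i _ => hsq i
  have hsum_nonneg : (0:ℝ) ≤ ∑ i, Real.sqrt (T i) :=
    Finset.sum_nonneg fun i _ => Real.sqrt_nonneg _
  have step3 : (∑ i, Real.sqrt (T i)) ≤ Real.sqrt ((K : ℝ) * m) := by
    rw [← Real.sqrt_sq hsum_nonneg]
    exact Real.sqrt_le_sqrt cs
  calc ∑ i, (T i : ℝ) * Δ i ≤ (∑ i, Real.sqrt (T i)) * (2 * Real.sqrt L) := step2
    _ ≤ Real.sqrt ((K : ℝ) * m) * (2 * Real.sqrt L) := by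
        have : (0:ℝ) ≤ 2 * Real.sqrt L := by positivity
        exact mul_le_mul_of_nonneg_right step3 this
    _ = 2 * Real.sqrt (m * K * L) := by
        rw [Real.sqrt_mul (by positivity), Real.sqrt_mul (by positivity),
          Real.sqrt_mul (Nat.cast_nonneg _)]
        ring
end

section
/- Define the binary relative entropy d(x,y) = x·log(x/y) + (1-x)·log((1-x)/(1-y)). Then for all x ∈ [1/2, 1] and y ∈ (0,1), d(x,y) ≥ (1/2)·log(1/(4y)). -/
/-- Binary relative entropy. -/
noncomputable def binRelEntropy (x y : ℝ) : ℝ :=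
  x * Real.log (x / y) + (1 - x) * Real.log ((1 - x) / (1 - y))

theorem binRelEntropy_lower_bound (x y : ℝ) (hx : x ∈ Set.Icc (1 / 2 : ℝ) 1)
    (hy : y ∈ Set.Ioo (0 : ℝ) 1) :
    (1 / 2) * Real.log (1 / (4 * y)) ≤ binRelEntropy x y := by
  obtain ⟨hx1, hx2⟩ := hx
  obtain ⟨hy1, hy2⟩ := hy
  have hx0 : (0:ℝ) < x := by linarith
  have hylog : Real.log y < 0 := Real.log_neg hy1 hy2
  have h1ylog : Real.log (1 - y) < 0 := Real.log_neg (by linarith) (by linarith)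
  -- rewrite binRelEntropy
  have hsplit1 : x * Real.log (x / y) = x * Real.log x - x * Real.log y := by
    rw [Real.log_div hx0.ne' hy1.ne']; ring
  have hsplit2 : (1 - x) * Real.log ((1 - x) / (1 - y))
      = (1 - x) * Real.log (1 - x) - (1 - x) * Real.log (1 - y) := by
    rcases eq_or_lt_of_le hx2 with h | h
    · simp [← h]
    · rw [Real.log_div (by linarith) (by linarith)]; ring
  have hent : -Real.log 2 ≤ x * Real.log x + (1 - x) * Real.log (1 - x) := by
    have h := Real.binEntropy_le_log_two (p := x)
    rw [Real.binEntropy] at h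
    rw [Real.log_inv, Real.log_inv] at h
    linarith
  have hB : x * Real.log y ≤ (1/2) * Real.log y :=
    mul_le_mul_of_nonpos_right hx1 hylog.le
  have hC : (1 - x) * Real.log (1 - y) ≤ 0 :=
    mul_nonpos_of_nonneg_of_nonpos (by linarith) h1ylog.le
  have hlhs : (1/2) * Real.log (1 / (4 * y)) = -Real.log 2 - (1/2) * Real.log y := by
    rw [Real.log_div one_ne_zero (by positivity), Real.log_one,
      Real.log_mul (by norm_num) hy1.ne', show (4:ℝ) = 2^2 by norm_num, Real.log_pow]
    push_cast; ring
  rw [hlhs]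
  unfold binRelEntropy
  rw [hsplit1, hsplit2]
  linarith
end
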